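/- Let 𝔭 be the set of all m×m real matrices of the form [[0, B],[B', 0]] and 𝔮 the set of all matrices [[0,0],[0,C]] with C·J + J·C = 0. Then: (1) the ℝ-linear span of {⁅X, Y⁆ : X ∈ 𝔮, Y ∈ 𝔭} equals 𝔭, and (2) 𝔮 is contained in the ℝ-linear span of {⁅Y₁, Y₂⁆ : Y₁, Y₂ ∈ 𝔭} (here ⁅X,Y⁆ = X·Y − Y·X). (These equalities express that the almost complex structure j⁻ is maximally non integrable on the 4-symmetric space associated to sl(k+2n,ℝ).) -/

import Mathlib

open Matrix

/-- The standard complex structure matrix `J = [[0, -Id_n],[Id_n, 0]]`. -/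
noncomputable def Jmat (n : ℕ) : Matrix (Fin n ⊕ Fin n) (Fin n ⊕ Fin n) ℝ :=
  Matrix.fromBlocks 0 (-1) 1 0

/-- `𝔭` : all matrices of the form `[[0,B],[B',0]]`. -/
def pFull (k n : ℕ) : Set (Matrix (Fin k ⊕ (Fin n ⊕ Fin n)) (Fin k ⊕ (Fin n ⊕ Fin n)) ℝ) :=
  {X | ∃ (B : Matrix (Fin k) (Fin n ⊕ Fin n) ℝ) (B' : Matrix (Fin n ⊕ Fin n) (Fin k) ℝ),
    X = Matrix.fromBlocks 0 B B' 0}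

/-- `𝔮` : all matrices of the form `[[0,0],[0,C]]` with `CJ + JC = 0`. -/
def qFull (k n : ℕ) : Set (Matrix (Fin k ⊕ (Fin n ⊕ Fin n)) (Fin k ⊕ (Fin n ⊕ Fin n)) ℝ) :=
  {X | ∃ C : Matrix (Fin n ⊕ Fin n) (Fin n ⊕ Fin n) ℝ,
    C * Jmat n + Jmat n * C = 0 ∧ X = Matrix.fromBlocks 0 0 0 C}

/-- `𝔭` as a submodule. -/
def Psub (k n : ℕ) : Submodule ℝ (Matrix (Fin k ⊕ (Fin n ⊕ Fin n)) (Fin k ⊕ (Fin n ⊕ Fin n)) ℝ) where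
  carrier := pFull k n
  add_mem' := by
    rintro a b ⟨B, B', rfl⟩ ⟨C, C', rfl⟩
    exact ⟨B + C, B' + C', by simp [Matrix.fromBlocks_add]⟩
  zero_mem' := ⟨0, 0, by simp⟩
  smul_mem' := by
    rintro c a ⟨B, B', rfl⟩
    exact ⟨c • B, c • B', by simp [Matrix.fromBlocks_smul]⟩

lemma fromBlocks_sub' {k l m n : Type*} (A A' : Matrix k l ℝ) (B B' : Matrix k m ℝ)
    (C C' : Matrix n l ℝ) (D D' : Matrix n m ℝ) :
    Matrix.fromBlocks A B C D - Matrix.fromBlocks A' B' C' D' =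
      Matrix.fromBlocks (A - A') (B - B') (C - C') (D - D') := by
  ext (a | a) (b | b) <;> simp [Matrix.fromBlocks]

lemma fromBlocks_sum {ι k n : Type*} [Fintype k] [Fintype n] (s : Finset ι)
    (A : ι → Matrix k k ℝ) (D : ι → Matrix n n ℝ) :
    ∑ i ∈ s, Matrix.fromBlocks (A i) 0 0 (D i) =
      Matrix.fromBlocks (∑ i ∈ s, A i) 0 0 (∑ i ∈ s, D i) := by
  classical
  induction s using Finset.induction with
  | empty => simp
  | insert _ _ h ih => simp [Finset.sum_insert h, ih, Matrix.fromBlocks_add]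

lemma sbm_mul {l m o : Type*} [Fintype m] [DecidableEq l] [DecidableEq m] [DecidableEq o]
    (i : l) (j j' : m) (k : o) (c d : ℝ) :
    Matrix.single i j c * Matrix.single j' k d =
      if j = j' then Matrix.single i k (c * d) else 0 := by
  ext a b
  simp only [Matrix.mul_apply, Matrix.single, Matrix.of_apply, ite_mul, zero_mul,
    mul_ite, mul_zero, ← ite_and]
  rcases eq_or_ne j j' with rfl | h
  · simp only [if_pos rfl]
    rw [Finset.sum_eq_single j]
    · by_cases h1 : i = a <;> by_cases h2 : k = b <;> simp [h1, h2, and_assoc]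
    · intro x _ hx; simp [Ne.symm hx, hx]
    · simp
  · rw [Finset.sum_eq_zero, if_neg h]
    · simp
    · intro x _; rw [if_neg]; rintro ⟨⟨rfl, _⟩, _, h2⟩; exact h h2

lemma JJ (n : ℕ) : Jmat n * Jmat n = -1 := by
  have : -(1 : Matrix (Fin n ⊕ Fin n) (Fin n ⊕ Fin n) ℝ) =
      Matrix.fromBlocks (-1) 0 0 (-1) := by
    rw [← Matrix.fromBlocks_one, Matrix.fromBlocks_neg]
    simp
  rw [this]
  simp [Jmat, Matrix.fromBlocks_multiply]

lemma trace_eq_zero_of_anticomm {n : ℕ} (C : Matrix (Fin n ⊕ Fin n) (Fin n ⊕ Fin n) ℝ)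
    (hC : C * Jmat n + Jmat n * C = 0) : Matrix.trace C = 0 := by
  have h1 : C * Jmat n = -(Jmat n * C) := by
    linear_combination (norm := noncomm_ring) hC
  have h2 : C = Jmat n * C * Jmat n := by
    calc C = -(C * (Jmat n * Jmat n)) := by rw [JJ]; simp
    _ = -(C * Jmat n * Jmat n) := by rw [mul_assoc]
    _ = -(-(Jmat n * C) * Jmat n) := by rw [h1]
    _ = Jmat n * C * Jmat n := by simp
  have h3 : Matrix.trace C = - Matrix.trace C := by
    conv_lhs => rw [h2]
    rw [Matrix.trace_mul_cycle, JJ]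
    simp
  linarith

theorem jMinus_maximally_non_integrable_sl (k n : ℕ) (hk : 0 < k) (hn : 0 < n) :
    (Submodule.span ℝ {Z | ∃ X ∈ qFull k n, ∃ Y ∈ pFull k n, Z = X * Y - Y * X} :
        Set (Matrix (Fin k ⊕ (Fin n ⊕ Fin n)) (Fin k ⊕ (Fin n ⊕ Fin n)) ℝ)) = pFull k n ∧
    qFull k n ⊆
      (Submodule.span ℝ {Z | ∃ Y₁ ∈ pFull k n, ∃ Y₂ ∈ pFull k n, Z = Y₁ * Y₂ - Y₂ * Y₁} :
        Set (Matrix (Fin k ⊕ (Fin n ⊕ Fin n)) (Fin k ⊕ (Fin n ⊕ Fin n)) ℝ)) := by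
  classical
  -- the matrix diag(1,-1), anticommuting with J and squaring to 1
  set Cm : Matrix (Fin n ⊕ Fin n) (Fin n ⊕ Fin n) ℝ := Matrix.fromBlocks 1 0 0 (-1) with hCm
  have hCmJ : Cm * Jmat n + Jmat n * Cm = 0 := by
    simp [hCm, Jmat, Matrix.fromBlocks_multiply, Matrix.fromBlocks_add]
  have hCmCm : Cm * Cm = 1 := by
    simp [hCm, Matrix.fromBlocks_multiply]
  constructor
  · apply Set.Subset.antisymm
    · have : Submodule.span ℝ {Z | ∃ X ∈ qFull k n, ∃ Y ∈ pFull k n, Z = X * Y - Y * X} ≤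
          Psub k n := by
        rw [Submodule.span_le]
        rintro Z ⟨X, ⟨C, hC, rfl⟩, Y, ⟨B, B', rfl⟩, rfl⟩
        exact ⟨-(B * C), C * B', by
          simp [Matrix.fromBlocks_multiply, fromBlocks_sub']⟩
      exact this
    · rintro X ⟨B, B', rfl⟩
      have h1 : Matrix.fromBlocks 0 B 0 0 ∈
          {Z | ∃ X ∈ qFull k n, ∃ Y ∈ pFull k n, Z = X * Y - Y * X} := by
        refine ⟨Matrix.fromBlocks 0 0 0 Cm, ⟨Cm, hCmJ, rfl⟩,
          Matrix.fromBlocks 0 (-(B * Cm)) 0 0, ⟨-(B * Cm), 0, rfl⟩, ?_⟩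
        have hBC : B * Cm * Cm = B := by rw [Matrix.mul_assoc, hCmCm, Matrix.mul_one]
        simp [Matrix.fromBlocks_multiply, fromBlocks_sub', hBC, Matrix.fromBlocks_neg]
      have h2 : Matrix.fromBlocks 0 0 B' 0 ∈
          {Z | ∃ X ∈ qFull k n, ∃ Y ∈ pFull k n, Z = X * Y - Y * X} := by
        refine ⟨Matrix.fromBlocks 0 0 0 Cm, ⟨Cm, hCmJ, rfl⟩,
          Matrix.fromBlocks 0 0 (Cm * B') 0, ⟨0, Cm * B', rfl⟩, ?_⟩
        have hCB : Cm * (Cm * B') = B' := by rw [← Matrix.mul_assoc, hCmCm, Matrix.one_mul]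
        simp [Matrix.fromBlocks_multiply, fromBlocks_sub', hCB]
      have hsum : Matrix.fromBlocks 0 B B' 0 =
          Matrix.fromBlocks 0 B 0 0 + Matrix.fromBlocks 0 0 B' 0 := by
        simp [Matrix.fromBlocks_add]
      rw [hsum]
      exact Submodule.add_mem _ (Submodule.subset_span h1) (Submodule.subset_span h2)
  · rintro X ⟨C, hC, rfl⟩
    have htr : Matrix.trace C = 0 := trace_eq_zero_of_anticomm C hC
    set e0 : Fin k := ⟨0, hk⟩
    set S₂ := {Z | ∃ Y₁ ∈ pFull k n, ∃ Y₂ ∈ pFull k n, Z = Y₁ * Y₂ - Y₂ * Y₁} with hS₂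
    set Y₁ : (Fin n ⊕ Fin n) → Matrix (Fin k ⊕ (Fin n ⊕ Fin n)) (Fin k ⊕ (Fin n ⊕ Fin n)) ℝ :=
      fun i => Matrix.fromBlocks 0 0 (Matrix.single i e0 1) 0 with hY₁
    set Y₂ : (Fin n ⊕ Fin n) → Matrix (Fin k ⊕ (Fin n ⊕ Fin n)) (Fin k ⊕ (Fin n ⊕ Fin n)) ℝ :=
      fun j => Matrix.fromBlocks 0 (Matrix.single e0 j 1) 0 0 with hY₂
    have hZmem : ∀ i j, Y₁ i * Y₂ j - Y₂ j * Y₁ i ∈ Submodule.span ℝ S₂ :=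
      fun i j => Submodule.subset_span
        ⟨Y₁ i, ⟨0, Matrix.single i e0 1, rfl⟩,
         Y₂ j, ⟨Matrix.single e0 j 1, 0, rfl⟩, rfl⟩
    have hZval : ∀ i j, Y₁ i * Y₂ j - Y₂ j * Y₁ i =
        Matrix.fromBlocks (-(if j = i then Matrix.single e0 e0 (1:ℝ) else 0)) 0 0
          (Matrix.single i j 1) := by
      intro i j
      rcases eq_or_ne j i with rfl | hji
      · simp [hY₁, hY₂, Matrix.fromBlocks_multiply, fromBlocks_sub', sbm_mul]
      · simp [hY₁, hY₂, Matrix.fromBlocks_multiply, fromBlocks_sub', sbm_mul, hji]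
    have key : Matrix.fromBlocks 0 0 0 C =
        ∑ i : Fin n ⊕ Fin n, ∑ j : Fin n ⊕ Fin n, C i j • (Y₁ i * Y₂ j - Y₂ j * Y₁ i) := by
      have hterm : ∀ i j, C i j • (Y₁ i * Y₂ j - Y₂ j * Y₁ i) =
          Matrix.fromBlocks
            (if j = i then -(C i j • Matrix.single e0 e0 (1:ℝ)) else 0) 0 0
            (Matrix.single i j (C i j)) := by
        intro i j
        rw [hZval i j, Matrix.fromBlocks_smul]
        rcases eq_or_ne j i with rfl | h <;> simp [*]
      simp_rw [hterm, fromBlocks_sum]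
      have h0 : (∑ i : Fin n ⊕ Fin n, ∑ j : Fin n ⊕ Fin n,
          if j = i then -(C i j • Matrix.single e0 e0 (1:ℝ)) else 0) = 0 := by
        simp only [Finset.sum_ite_eq', Finset.mem_univ, if_true]
        simp_rw [← neg_smul]
        rw [← Finset.sum_smul]
        have hs : (∑ i : Fin n ⊕ Fin n, -C i i) = 0 := by
          have htr' : (∑ i : Fin n ⊕ Fin n, C i i) = 0 := by
            simpa [Matrix.trace, Matrix.diag] using htr
          simp [htr']
        rw [hs, zero_smul]
      have h1 : (∑ i : Fin n ⊕ Fin n, ∑ j : Fin n ⊕ Fin n,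
          Matrix.single i j (C i j)) = C :=
        (Matrix.matrix_eq_sum_single C).symm
      rw [h0, h1]
    rw [key]
    exact Submodule.sum_mem _ fun i _ => Submodule.sum_mem _ fun j _ =>
      Submodule.smul_mem _ _ (hZmem i j)
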